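/- Let (x_1,...,x_n) be a pure Nash equilibrium of the Battling Influencers Game and suppose for some player i* the weight w_{i*} is nonzero and x_{i*} lies in the topological interior of 𝒳. Then the receiver's point equals player i*'s target: w_0 x_0 + ∑_{j=1}^n w_j x_j = t_{i*}. -/

import Mathlib

open scoped RealInnerProductSpace

noncomputable section

/-- Player `i`'s loss in the Battling Influencers Game:
`ℓ_i(x) = ‖w_0 x_0 + ∑_{j=1}^n w_j x_j − t_i‖₂²`. -/
def loss {d n : ℕ} (w0 : ℝ) (x0 : EuclideanSpace ℝ (Fin d)) (w : Fin n → ℝ)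
    (t : Fin n → EuclideanSpace ℝ (Fin d)) (i : Fin n)
    (x : Fin n → EuclideanSpace ℝ (Fin d)) : ℝ :=
  ‖w0 • x0 + (∑ j, w j • x j) - t i‖ ^ 2

/-- A pure Nash equilibrium of the Battling Influencers Game with common action
set `X`: every player plays in `X` and no player can strictly decrease its own
loss by a unilateral deviation inside `X`. -/
def IsPureNE {d n : ℕ} (X : Set (EuclideanSpace ℝ (Fin d))) (w0 : ℝ)
    (x0 : EuclideanSpace ℝ (Fin d)) (w : Fin n → ℝ)
    (t : Fin n → EuclideanSpace ℝ (Fin d))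
    (x : Fin n → EuclideanSpace ℝ (Fin d)) : Prop :=
  (∀ i, x i ∈ X) ∧
    ∀ i, ∀ y ∈ X, loss w0 x0 w t i x ≤ loss w0 x0 w t i (Function.update x i y)

/-! An interior equilibrium action of player `i⋆` is a local minimiser of
`y ↦ ‖a + w_{i⋆} y‖²`, whose derivative at the equilibrium action, evaluated in the direction
of the receiver's residual `v = x̂ − t_{i⋆}`, is `2 w_{i⋆} ‖v‖²`. Since `w_{i⋆} ≠ 0`, the
first-order condition forces `v = 0`. -/

theorem Fintype.sum_smul_update {ι R M : Type*} [Fintype ι] [DecidableEq ι] [Ring R]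
    [AddCommGroup M] [Module R M] (w : ι → R) (x : ι → M) (i : ι) (y : M) :
    ∑ j, w j • Function.update x i y j = ∑ j, w j • x j + w i • (y - x i) := by
  rw [← sub_eq_iff_eq_add', ← Finset.sum_sub_distrib,
    Finset.sum_eq_single_of_mem i (Finset.mem_univ i) fun j _ hj => by simp [hj]]
  simp [smul_sub]

theorem eq_zero_of_isLocalMin_norm_add_smul_sq {E : Type*} [NormedAddCommGroup E]
    [InnerProductSpace ℝ E] {a y₀ : E} {c : ℝ} (hc : c ≠ 0)
    (h : IsLocalMin (fun y => ‖a + c • y‖ ^ 2) y₀) : a + c • y₀ = 0 := by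
  set v := a + c • y₀
  have hderiv : HasFDerivAt (fun y => ‖a + c • y‖ ^ 2)
      (2 • (innerSL ℝ v).comp (c • ContinuousLinearMap.id ℝ E)) y₀ :=
    ((hasFDerivAt_id y₀).const_smul c |>.const_add a).norm_sq
  have hv : 2 * (c * ‖v‖ ^ 2) = 0 := by
    simpa [real_inner_smul_right, real_inner_self_eq_norm_sq] using
      congrArg (· v) (h.hasFDerivAt_eq_zero hderiv)
  simpa [hc] using hv

theorem loss_update {d n : ℕ} (w0 : ℝ) (x0 : EuclideanSpace ℝ (Fin d)) (w : Fin n → ℝ)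
    (t : Fin n → EuclideanSpace ℝ (Fin d)) (x : Fin n → EuclideanSpace ℝ (Fin d)) (i : Fin n)
    (y : EuclideanSpace ℝ (Fin d)) :
    loss w0 x0 w t i (Function.update x i y) =
      ‖(w0 • x0 + ∑ j, w j • x j - w i • x i - t i) + w i • y‖ ^ 2 := by
  rw [loss, Fintype.sum_smul_update, smul_sub]
  congr 2
  abel

theorem IsPureNE.isLocalMin_loss_update {d n : ℕ} {X : Set (EuclideanSpace ℝ (Fin d))}
    {w0 : ℝ} {x0 : EuclideanSpace ℝ (Fin d)} {w : Fin n → ℝ}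
    {t : Fin n → EuclideanSpace ℝ (Fin d)} {x : Fin n → EuclideanSpace ℝ (Fin d)}
    (hNE : IsPureNE X w0 x0 w t x) {i : Fin n} (hX : X ∈ nhds (x i)) :
    IsLocalMin (fun y => loss w0 x0 w t i (Function.update x i y)) (x i) := by
  refine IsMinOn.isLocalMin (fun y hy => ?_) hX
  simpa only [Set.mem_ofPred_eq, Function.update_eq_self] using hNE.2 i y hy

/-- If at a pure Nash equilibrium some player `i⋆` with nonzero weight plays in
the interior of `𝒳`, then the receiver's point equals that player's target:
`w_0 x_0 + ∑_{j=1}^n w_j x_j = t_{i⋆}`. -/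
theorem pNE_interior_on_target {d n : ℕ} (X : Set (EuclideanSpace ℝ (Fin d)))
    (w0 : ℝ) (x0 : EuclideanSpace ℝ (Fin d)) (w : Fin n → ℝ)
    (t : Fin n → EuclideanSpace ℝ (Fin d))
    (x : Fin n → EuclideanSpace ℝ (Fin d)) (hNE : IsPureNE X w0 x0 w t x)
    (istar : Fin n) (hwi : w istar ≠ 0) (hint : x istar ∈ interior X) :
    w0 • x0 + (∑ j, w j • x j) = t istar := by
  have hmin := hNE.isLocalMin_loss_update (mem_interior_iff_mem_nhds.mp hint)
  simp only [loss_update] at hmin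
  have hfoc := eq_zero_of_isLocalMin_norm_add_smul_sq hwi hmin
  rwa [sub_sub, sub_add_eq_sub_sub_swap, sub_add_cancel, sub_eq_zero] at hfoc

end
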